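/- Let (H,R) be a quasitriangular Hopf algebra, M a left-left Yetter–Drinfeld module over H. Define χ⁻(m) = Σ m₍₋₁₎S(R²) ⊗ R¹·m₍₀₎ and χ⁺(m) = Σ R²·m₍₀₎ ⊗ R¹m₍₋₁₎, and let σ(x⊗m) = Σ r²R¹·m ⊗ r¹xR² for x ∈ H, m ∈ M. Then χ⁺ = σ ∘ χ⁻, i.e. the resulting ₍R₎H-bicomodule structure on M is cocommutative. -/

import Mathlib

/-! Applying `id ⊗ μ ∘ (S ⊗ id)` to (QT3) and simplifying with the antipode axiom and (QT1)
gives `∑ R¹r¹ ⊗ S(r²)R² = 1 ⊗ 1`. In `σ(χ⁻(m)) = ∑ r²R'¹R¹·m₍₀₎ ⊗ r¹m₍₋₁₎S(R²)R'²` the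
factors `R'¹R¹` and `S(R²)R'²` are exactly the two legs of that identity, so they cancel and
leave `∑ r²·m₍₀₎ ⊗ r¹m₍₋₁₎ = χ⁺(m)`. -/

open TensorProduct

noncomputable section

/-- Scalar multiplication by a fixed `h : H` as a `k`-linear map. -/
def smulL (k : Type) {H M : Type} [CommRing k] [Ring H] [AddCommGroup M]
    [Module k M] [Module H M] [SMulCommClass H k M] (h : H) : M →ₗ[k] M where
  toFun m := h • m
  map_add' := smul_add h
  map_smul' c m := smul_comm h c m

/-- The module action `H ⊗ M → M` as a linear map. -/
def actT (k H M : Type) [CommRing k] [Ring H] [Algebra k H] [AddCommGroup M]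
    [Module k M] [Module H M] [IsScalarTower k H M] [SMulCommClass H k M] :
    H ⊗[k] M →ₗ[k] M :=
  TensorProduct.lift
    { toFun := fun h => smulL k h
      map_add' := fun h h' => LinearMap.ext fun m => add_smul h h' m
      map_smul' := fun c h => LinearMap.ext fun m => smul_assoc c h m }

/-- Quasitriangular structure, with the R-matrix given by a finite family
`R = ∑ i, R1 i ⊗ R2 i`, satisfying (QT1)-(QT4) and invertibility. -/
structure QT (k H : Type) [CommRing k] [Ring H] [HopfAlgebra k H]
    {ι : Type} [Fintype ι] (R1 R2 : ι → H) : Prop where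
  qt1a : ∑ i, Coalgebra.counit (R := k) (R1 i) • R2 i = (1 : H)
  qt1b : ∑ i, Coalgebra.counit (R := k) (R2 i) • R1 i = (1 : H)
  qt2 : ∑ i, Coalgebra.comul (R := k) (R1 i) ⊗ₜ[k] R2 i
      = ∑ i, ∑ j, (R1 i ⊗ₜ[k] R1 j) ⊗ₜ[k] (R2 i * R2 j)
  qt3 : ∑ i, R1 i ⊗ₜ[k] Coalgebra.comul (R := k) (R2 i)
      = ∑ i, ∑ j, (R1 i * R1 j) ⊗ₜ[k] (R2 j ⊗ₜ[k] R2 i)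
  qt4 : ∀ h : H, (∑ i, R1 i ⊗ₜ[k] R2 i) * Coalgebra.comul (R := k) h
      = TensorProduct.comm k H H (Coalgebra.comul (R := k) h) * (∑ i, R1 i ⊗ₜ[k] R2 i)
  isUnit : IsUnit (∑ i, R1 i ⊗ₜ[k] R2 i)

/-- The left adjoint action `h ⊗ x ↦ h₁ x S(h₂)` as a linear map. -/
def adjT (k H : Type) [CommRing k] [Ring H] [HopfAlgebra k H] : H ⊗[k] H →ₗ[k] H :=
  (LinearMap.mul' k H) ∘ₗ
    (LinearMap.lTensor H (LinearMap.mul' k H)) ∘ₗ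
    (LinearMap.lTensor H ((TensorProduct.map (LinearMap.id : H →ₗ[k] H)
        (HopfAlgebra.antipode (R := k))) ∘ₗ (TensorProduct.comm k H H).toLinearMap)) ∘ₗ
    (TensorProduct.assoc k H H H).toLinearMap ∘ₗ
    (LinearMap.rTensor H (Coalgebra.comul (R := k)))

/-- The diagonal action of `H` on `M ⊗ N`, `h ⊗ (m ⊗ n) ↦ h₁·m ⊗ h₂·n`. -/
def actD (k H M N : Type) [CommRing k] [Ring H] [HopfAlgebra k H]
    [AddCommGroup M] [Module k M] [Module H M] [IsScalarTower k H M] [SMulCommClass H k M]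
    [AddCommGroup N] [Module k N] [Module H N] [IsScalarTower k H N] [SMulCommClass H k N] :
    H ⊗[k] (M ⊗[k] N) →ₗ[k] M ⊗[k] N :=
  (TensorProduct.map (actT k H M) (actT k H N)) ∘ₗ
    (TensorProduct.tensorTensorTensorComm k H H M N).toLinearMap ∘ₗ
    (LinearMap.rTensor (M ⊗[k] N) (Coalgebra.comul (R := k)))

/-- Left-hand side of the Yetter-Drinfeld compatibility condition,
`h ⊗ m ↦ h₁ m₍₋₁₎ ⊗ h₂ · m₍₀₎`, relative to an action map `act` and coaction `lam`. -/
def ydLa (k H M : Type) [CommRing k] [Ring H] [HopfAlgebra k H] [AddCommGroup M] [Module k M]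
    (act : H ⊗[k] M →ₗ[k] M) (lam : M →ₗ[k] H ⊗[k] M) : H ⊗[k] M →ₗ[k] H ⊗[k] M :=
  (TensorProduct.map (LinearMap.mul' k H) act) ∘ₗ
    (TensorProduct.tensorTensorTensorComm k H H H M).toLinearMap ∘ₗ
    (TensorProduct.map (Coalgebra.comul (R := k)) lam)

/-- Right-hand side of the Yetter-Drinfeld compatibility condition,
`h ⊗ m ↦ (h₁·m)₍₋₁₎ h₂ ⊗ (h₁·m)₍₀₎`. -/
def ydRa (k H M : Type) [CommRing k] [Ring H] [HopfAlgebra k H] [AddCommGroup M] [Module k M]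
    (act : H ⊗[k] M →ₗ[k] M) (lam : M →ₗ[k] H ⊗[k] M) : H ⊗[k] M →ₗ[k] H ⊗[k] M :=
  (LinearMap.rTensor M ((LinearMap.mul' k H) ∘ₗ (TensorProduct.comm k H H).toLinearMap)) ∘ₗ
    (TensorProduct.assoc k H H M).symm.toLinearMap ∘ₗ
    (LinearMap.lTensor H (lam ∘ₗ act)) ∘ₗ
    (TensorProduct.assoc k H H M).toLinearMap ∘ₗ
    (LinearMap.rTensor M (TensorProduct.comm k H H).toLinearMap) ∘ₗ
    (LinearMap.rTensor M (Coalgebra.comul (R := k)))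

@[simp]
theorem smulL_apply (k : Type) {H M : Type} [CommRing k] [Ring H] [AddCommGroup M]
    [Module k M] [Module H M] [SMulCommClass H k M] (h : H) (m : M) : smulL k h m = h • m :=
  rfl

namespace QT

variable {k H : Type} [CommRing k] [Ring H] [HopfAlgebra k H] {ι : Type} [Fintype ι]
  {R1 R2 : ι → H}

theorem sum_mul_tmul_antipode_mul (hqt : QT k H R1 R2) :
    ∑ i, ∑ j, (R1 i * R1 j) ⊗ₜ[k] (HopfAlgebra.antipode k (R2 j) * R2 i) = (1 : H) ⊗ₜ[k] 1 := by
  have h3 := congrArg (LinearMap.lTensor H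
    (LinearMap.mul' k H ∘ₗ (HopfAlgebra.antipode k).rTensor H)) hqt.qt3
  simp only [map_sum, LinearMap.lTensor_tmul, LinearMap.comp_apply, LinearMap.rTensor_tmul,
    LinearMap.mul'_apply, HopfAlgebra.mul_antipode_rTensor_comul_apply] at h3
  rw [← h3]
  simp only [Algebra.algebraMap_eq_smul_one, tmul_smul, smul_tmul', ← sum_tmul, hqt.qt1b]

theorem sum_smul_tmul_mul_antipode_mul (hqt : QT k H R1 R2) {M : Type} [AddCommGroup M]
    [Module k M] [Module H M] [IsScalarTower k H M] (a y : H) (n : M) :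
    ∑ i, ∑ j, ((a * (R1 i * R1 j)) • n) ⊗ₜ[k] (y * (HopfAlgebra.antipode k (R2 j) * R2 i))
      = (a • n) ⊗ₜ[k] y := by
  simpa only [map_sum, map_tmul, LinearMap.coe_smulRight, LinearMap.mulLeft_apply, mul_one] using
    congrArg (TensorProduct.map ((LinearMap.mulLeft k a).smulRight n) (LinearMap.mulLeft k y))
      hqt.sum_mul_tmul_antipode_mul

end QT

section Cocommutative

variable (k H M : Type) [Field k] [Ring H] [HopfAlgebra k H]
variable [AddCommGroup M] [Module k M] [Module H M] [IsScalarTower k H M] [SMulCommClass H k M]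
variable {ι : Type} [Fintype ι] (R1 R2 : ι → H)

/-- The induced left `₍R₎H`-comodule structure `χ⁻(m) = ∑ m₍₋₁₎S(R²) ⊗ R¹·m₍₀₎`. -/
def chiMinus (lam : M →ₗ[k] H ⊗[k] M) : M →ₗ[k] H ⊗[k] M :=
  ∑ i, (TensorProduct.map (LinearMap.mulRight k (HopfAlgebra.antipode (R := k) (R2 i)))
    (smulL k (R1 i) : M →ₗ[k] M)) ∘ₗ lam

/-- The induced right `₍R₎H`-comodule structure `χ⁺(m) = ∑ R²·m₍₀₎ ⊗ R¹m₍₋₁₎`. -/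
def chiPlus (lam : M →ₗ[k] H ⊗[k] M) : M →ₗ[k] M ⊗[k] H :=
  ∑ i, (TensorProduct.map (smulL k (R2 i) : M →ₗ[k] M) (LinearMap.mulLeft k (R1 i))) ∘ₗ
    (TensorProduct.comm k H M).toLinearMap ∘ₗ lam

/-- The half-braiding `σ(x ⊗ m) = ∑ r²R¹·m ⊗ r¹xR²`. -/
def sigmaMap : H ⊗[k] M →ₗ[k] M ⊗[k] H :=
  ∑ j, ∑ i, (TensorProduct.map (smulL k (R2 j * R1 i) : M →ₗ[k] M)
      ((LinearMap.mulLeft k (R1 j)) ∘ₗ (LinearMap.mulRight k (R2 i)))) ∘ₗ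
    (TensorProduct.comm k H M).toLinearMap

omit [IsScalarTower k H M] in
theorem sigmaMap_tmul (x : H) (n : M) :
    sigmaMap k H M R1 R2 (x ⊗ₜ[k] n) = ∑ j, ∑ i, ((R2 j * R1 i) • n) ⊗ₜ[k] (R1 j * x * R2 i) := by
  simp only [sigmaMap, LinearMap.coe_sum, LinearMap.coe_comp, LinearEquiv.coe_coe,
    Finset.sum_apply, Function.comp_apply, comm_tmul, map_tmul, smulL_apply,
    LinearMap.mulRight_apply, LinearMap.mulLeft_apply, mul_assoc]

theorem sigmaMap_comp_sum_map_antipode (hqt : QT k H R1 R2) :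
    sigmaMap k H M R1 R2 ∘ₗ ∑ i, TensorProduct.map
        (LinearMap.mulRight k (HopfAlgebra.antipode k (R2 i))) (smulL k (R1 i) : M →ₗ[k] M)
      = ∑ i, TensorProduct.map (smulL k (R2 i) : M →ₗ[k] M) (LinearMap.mulLeft k (R1 i)) ∘ₗ
          (TensorProduct.comm k H M).toLinearMap := by
  refine TensorProduct.ext' fun x n => ?_
  simp only [LinearMap.comp_apply, LinearMap.sum_apply, map_sum, TensorProduct.map_tmul,
    LinearMap.mulRight_apply, smulL_apply, sigmaMap_tmul, LinearEquiv.coe_coe,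
    TensorProduct.comm_tmul, LinearMap.mulLeft_apply]
  rw [Finset.sum_comm]
  refine Finset.sum_congr rfl fun j _ => ?_
  rw [← hqt.sum_smul_tmul_mul_antipode_mul (R2 j) (R1 j * x) n, Finset.sum_comm]
  simp only [← mul_smul, mul_assoc]

theorem yd_bicomodule_cocommutative (hqt : QT k H R1 R2)
    (lam : M →ₗ[k] H ⊗[k] M) :
    chiPlus k H M R1 R2 lam = (sigmaMap k H M R1 R2) ∘ₗ (chiMinus k H M R1 R2 lam) := by
  ext m
  simpa only [chiPlus, chiMinus, LinearMap.coe_sum, LinearMap.coe_comp, LinearEquiv.coe_coe,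
    Finset.sum_apply, Function.comp_apply, map_sum] using
    (LinearMap.congr_fun (sigmaMap_comp_sum_map_antipode k H M R1 R2 hqt) (lam m)).symm

end Cocommutative

end
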